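/- Let F be a field, G a finite group, and V and W two G-modules. Then topdeg F[V ⊕ W]_G ≤ topdeg F[V]_G + topdeg F[W]_G. In particular, topdeg F[V^m]_G ≤ m · topdeg F[V]_G for all positive integers m, where V^m is the direct sum of m copies of V. -/

import Mathlib

open MvPolynomial

variable {F G ι : Type*} [Field F] [Group G] [Fintype ι] [DecidableEq ι]

/-- The (left) action of a group element `σ` on the polynomial algebra
`F[V] = S(V^*)` presented as `MvPolynomial ι F`, for a matrix representation
`ρ : G →* GL(ι, F)` of `G` on `V = (ι → F)`.  It is given by `σ • f = f ∘ σ⁻¹`,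
i.e. by linear substitution of the variables using the matrix of `ρ σ⁻¹`. -/
noncomputable def polyAct (ρ : G →* (Matrix ι ι F)ˣ) (σ : G)
    (f : MvPolynomial ι F) : MvPolynomial ι F :=
  MvPolynomial.aeval
    (fun i => ∑ j, ((ρ σ⁻¹ : Matrix ι ι F) i j) • (MvPolynomial.X j : MvPolynomial ι F)) f

/-- A polynomial is invariant if it is fixed by the action of every group element. -/
def IsInv (ρ : G →* (Matrix ι ι F)ˣ) (f : MvPolynomial ι F) : Prop :=
  ∀ σ : G, polyAct ρ σ f = f

/-- The Hilbert ideal: the ideal of `F[V]` generated by the homogeneous invariants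
of positive degree. -/
noncomputable def hilbertIdeal (ρ : G →* (Matrix ι ι F)ˣ) : Ideal (MvPolynomial ι F) :=
  Ideal.span {f : MvPolynomial ι F | (∃ d, 0 < d ∧ f.IsHomogeneous d) ∧ IsInv ρ f}

/-- The top degree of the coinvariant algebra `F[V]_G = F[V]/(Hilbert ideal)`:
the largest degree `d` such that the degree-`d` homogeneous component of `F[V]_G`
is nonzero; since the Hilbert ideal is homogeneous this is the largest `d` for
which some homogeneous polynomial of degree `d` is not in the Hilbert ideal. -/
noncomputable def topDeg (ρ : G →* (Matrix ι ι F)ˣ) : ℕ :=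
  sSup {d : ℕ | ∃ f : MvPolynomial ι F, f.IsHomogeneous d ∧ f ∉ hilbertIdeal ρ}

/-- The dimension of the coinvariant algebra `F[V]_G` as an `F`-vector space. -/
noncomputable def coinvDim (ρ : G →* (Matrix ι ι F)ˣ) : ℕ :=
  Module.finrank F (MvPolynomial ι F ⧸ hilbertIdeal ρ)

/-- The representation of `G` on the direct sum `V ⊕ W` of two matrix
representations, given by block diagonal matrices. -/
noncomputable def glSum {κ : Type*} [Fintype κ] [DecidableEq κ]
    (ρV : G →* (Matrix ι ι F)ˣ) (ρW : G →* (Matrix κ κ F)ˣ) :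
    G →* (Matrix (ι ⊕ κ) (ι ⊕ κ) F)ˣ where
  toFun σ :=
    { val := Matrix.fromBlocks (ρV σ) 0 0 (ρW σ)
      inv := Matrix.fromBlocks (ρV σ⁻¹) 0 0 (ρW σ⁻¹)
      val_inv := by
        rw [Matrix.fromBlocks_multiply, ← Units.val_mul, ← Units.val_mul, ← map_mul,
          ← map_mul, mul_inv_cancel, map_one, map_one, Units.val_one, Units.val_one]
        simp
      inv_val := by
        rw [Matrix.fromBlocks_multiply, ← Units.val_mul, ← Units.val_mul, ← map_mul,
          ← map_mul, inv_mul_cancel, map_one, map_one, Units.val_one, Units.val_one]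
        simp }
  map_one' := by
    ext
    simp [Matrix.fromBlocks_one]
  map_mul' := by
    intro σ τ
    ext
    simp only [Units.val_mul, Matrix.fromBlocks_multiply, map_mul, mul_zero, zero_mul,
      add_zero, zero_add, Matrix.mul_zero, Matrix.zero_mul]

/-- The representation of `G` on the direct sum `V^m` of `m` copies of `V`,
given by block diagonal matrices. -/
noncomputable def glPow (ρ : G →* (Matrix ι ι F)ˣ) (m : ℕ) :
    G →* (Matrix (ι × Fin m) (ι × Fin m) F)ˣ :=
  (Units.map (Matrix.blockDiagonalRingHom ι (Fin m) F).toMonoidHom).comp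
    ((Units.map (Pi.constRingHom (Fin m) (Matrix ι ι F)).toMonoidHom).comp ρ)


/-!
Every monomial of degree larger than `topDeg ρ` lies in the Hilbert ideal. That `topDeg ρ` is a
genuine maximum comes from `X i ^ |G|` lying in the Hilbert ideal: `X i` is a root of the monic
polynomial `∏ σ, (T - σ • X i)`, whose lower coefficients are homogeneous invariants of positive
degree.

A monomial on `V ⊕ W` of degree larger than `topDeg ρV + topDeg ρW` has its `V`-part of degree
larger than `topDeg ρV` or its `W`-part of degree larger than `topDeg ρW`. That part lies in the
Hilbert ideal of `V` (resp. `W`), and the equivariant inclusion `F[V] → F[V ⊕ W]` maps this ideal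
into the Hilbert ideal of `V ⊕ W`, so the monomial lies there too. The same pigeonhole argument
works for `V^m`.
-/

theorem MvPolynomial.isHomogeneous_coeff_prod_X_sub_C {σ R α : Type*} [CommRing R]
    (s : Finset α) {ℓ : α → MvPolynomial σ R} (hℓ : ∀ a ∈ s, (ℓ a).IsHomogeneous 1) {k : ℕ}
    (hk : k ≤ s.card) :
    ((∏ a ∈ s, (Polynomial.X - Polynomial.C (ℓ a))).coeff k).IsHomogeneous (s.card - k) := by
  simp_rw [sub_eq_add_neg, ← map_neg]
  rw [Finset.prod_X_add_C_coeff s _ hk]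
  refine IsHomogeneous.sum _ _ _ fun t ht => ?_
  rw [Finset.mem_powersetCard] at ht
  rw [← ht.2, Finset.card_eq_sum_ones]
  exact IsHomogeneous.prod t _ _ fun a ha => (hℓ a (ht.1 ha)).neg

theorem MvPolynomial.monomial_mem_of_le {σ R : Type*} [CommSemiring R]
    {I : Ideal (MvPolynomial σ R)} {s t : σ →₀ ℕ} (ht : monomial t 1 ∈ I) (h : t ≤ s) (c : R) :
    monomial s c ∈ I := by
  rw [← add_tsub_cancel_of_le h, ← one_mul c, ← monomial_mul]
  exact I.mul_mem_right _ ht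

theorem MvPolynomial.mem_of_forall_monomial_mem {σ R : Type*} [CommSemiring R]
    {I : Ideal (MvPolynomial σ R)} {f : MvPolynomial σ R}
    (h : ∀ s ∈ f.support, monomial s 1 ∈ I) : f ∈ I := by
  rw [← f.support_sum_monomial_coeff]
  exact I.sum_mem fun s hs => monomial_mem_of_le (h s hs) le_rfl _

section Action

variable (ρ : G →* (Matrix ι ι F)ˣ)

noncomputable def polyActAlgHom (σ : G) : MvPolynomial ι F →ₐ[F] MvPolynomial ι F :=
  aeval fun i => ∑ j, ((ρ σ⁻¹ : Matrix ι ι F) i j) • (X j : MvPolynomial ι F)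

@[simp]
theorem polyActAlgHom_apply (σ : G) (f : MvPolynomial ι F) :
    polyActAlgHom ρ σ f = polyAct ρ σ f :=
  rfl

theorem polyAct_X (σ : G) (i : ι) :
    polyAct ρ σ (X i) = ∑ j, ((ρ σ⁻¹ : Matrix ι ι F) i j) • (X j : MvPolynomial ι F) :=
  aeval_X _ _

theorem polyAct_one (f : MvPolynomial ι F) : polyAct ρ 1 f = f := by
  suffices polyActAlgHom ρ 1 = AlgHom.id F _ from DFunLike.congr_fun this f
  refine algHom_ext fun i => ?_
  simp [polyAct_X, Matrix.one_apply, ite_smul]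

theorem polyAct_mul (σ τ : G) (f : MvPolynomial ι F) :
    polyAct ρ (σ * τ) f = polyAct ρ σ (polyAct ρ τ f) := by
  suffices polyActAlgHom ρ (σ * τ) = (polyActAlgHom ρ σ).comp (polyActAlgHom ρ τ) from
    DFunLike.congr_fun this f
  refine algHom_ext fun i => ?_
  simp only [AlgHom.comp_apply, polyActAlgHom_apply, polyAct_X, map_sum, map_smul,
    Finset.smul_sum, smul_smul, mul_inv_rev, map_mul, Units.val_mul, Matrix.mul_apply,
    Finset.sum_smul]
  exact Finset.sum_comm

theorem MvPolynomial.IsHomogeneous.polyAct {f : MvPolynomial ι F} {n : ℕ}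
    (hf : f.IsHomogeneous n) (σ : G) : (polyAct ρ σ f).IsHomogeneous n := by
  have hlin (i : ι) :
      (∑ j, ((ρ σ⁻¹ : Matrix ι ι F) i j) • (X j : MvPolynomial ι F)).IsHomogeneous 1 :=
    IsHomogeneous.sum _ _ _ fun j _ =>
      (homogeneousSubmodule ι F 1).smul_mem _ (isHomogeneous_X F j)
  rw [← one_mul n]
  exact hf.aeval _ hlin

end Action

section TopDegree

variable (ρ : G →* (Matrix ι ι F)ˣ)

theorem mem_upperBounds_of_monomial_mem {n : ℕ}
    (h : ∀ s : ι →₀ ℕ, n < s.degree → monomial s 1 ∈ hilbertIdeal ρ) :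
    n ∈ upperBounds {d | ∃ f : MvPolynomial ι F, f.IsHomogeneous d ∧ f ∉ hilbertIdeal ρ} := by
  rintro d ⟨f, hf, hfI⟩
  by_contra! hnd
  refine hfI (mem_of_forall_monomial_mem fun s hs => h s ?_)
  rw [Finsupp.degree_eq_weight_one]
  exact hnd.trans_eq (hf (mem_support_iff.1 hs)).symm

theorem topDeg_le_of_monomial_mem {n : ℕ}
    (h : ∀ s : ι →₀ ℕ, n < s.degree → monomial s 1 ∈ hilbertIdeal ρ) : topDeg ρ ≤ n :=
  csSup_le' (mem_upperBounds_of_monomial_mem ρ h)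

variable [Fintype G]

noncomputable def orbitPoly (i : ι) : Polynomial (MvPolynomial ι F) :=
  ∏ σ : G, (Polynomial.X - Polynomial.C (polyAct ρ σ (X i)))

theorem orbitPoly_monic (i : ι) : (orbitPoly ρ i).Monic :=
  Polynomial.monic_prod_X_sub_C _ _

theorem natDegree_orbitPoly (i : ι) : (orbitPoly ρ i).natDegree = Fintype.card G := by
  simp [orbitPoly]

theorem orbitPoly_isRoot (i : ι) : (orbitPoly ρ i).IsRoot (X i) := by
  rw [orbitPoly, Polynomial.IsRoot, Polynomial.eval_prod]
  exact Finset.prod_eq_zero (Finset.mem_univ 1) (by simp [polyAct_one])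

theorem orbitPoly_map_polyActAlgHom (i : ι) (τ : G) :
    (orbitPoly ρ i).map (polyActAlgHom ρ τ : MvPolynomial ι F →+* MvPolynomial ι F) =
      orbitPoly ρ i := by
  simp only [orbitPoly, Polynomial.map_prod, Polynomial.map_sub, Polynomial.map_X,
    Polynomial.map_C, RingHom.coe_coe, polyActAlgHom_apply, ← polyAct_mul]
  exact Fintype.prod_equiv (Equiv.mulLeft τ) _ _ fun σ => rfl

theorem isWeaklyEisensteinAt_orbitPoly (i : ι) :
    (orbitPoly ρ i).IsWeaklyEisensteinAt (hilbertIdeal ρ) := by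
  refine ⟨fun {k} hk => ?_⟩
  rw [natDegree_orbitPoly] at hk
  refine Ideal.subset_span ⟨⟨Fintype.card G - k, by omega, ?_⟩, fun τ => ?_⟩
  · exact isHomogeneous_coeff_prod_X_sub_C Finset.univ
      (fun σ _ => (isHomogeneous_X F i).polyAct ρ σ) hk.le
  · simpa [Polynomial.coeff_map] using
      congrArg (Polynomial.coeff · k) (orbitPoly_map_polyActAlgHom ρ i τ)

theorem X_pow_card_mem_hilbertIdeal (i : ι) : X i ^ Fintype.card G ∈ hilbertIdeal ρ :=
  (isWeaklyEisensteinAt_orbitPoly ρ i).pow_natDegree_le_of_root_of_monic_mem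
    (orbitPoly_isRoot ρ i) (orbitPoly_monic ρ i) _ (natDegree_orbitPoly ρ i).le

theorem monomial_mem_hilbertIdeal_of_card_mul_lt {s : ι →₀ ℕ}
    (hs : Fintype.card ι * Fintype.card G < s.degree) : monomial s 1 ∈ hilbertIdeal ρ := by
  rw [Finsupp.degree_eq_sum] at hs
  obtain ⟨i, -, hi⟩ := Finset.exists_lt_of_sum_lt (s := Finset.univ)
    (f := fun _ => Fintype.card G) (by simpa using hs)
  exact monomial_mem_of_le (X_pow_eq_monomial (R := F) ▸ X_pow_card_mem_hilbertIdeal ρ i)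
    (Finsupp.single_le_iff.2 hi.le) 1

theorem monomial_mem_hilbertIdeal_of_topDeg_lt {s : ι →₀ ℕ} (hs : topDeg ρ < s.degree) (c : F) :
    monomial s c ∈ hilbertIdeal ρ := by
  by_contra h
  have hbdd :=
    mem_upperBounds_of_monomial_mem ρ fun _ => monomial_mem_hilbertIdeal_of_card_mul_lt ρ
  exact hs.not_ge (le_csSup ⟨_, hbdd⟩ ⟨_, isHomogeneous_monomial c rfl, h⟩)

end TopDegree

section Rename

variable {η : Type*} [Fintype η] [DecidableEq η]

def IsEquivariantRename (ρ : G →* (Matrix ι ι F)ˣ) (ρ' : G →* (Matrix η η F)ˣ) (e : ι → η) :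
    Prop :=
  ∀ σ i, polyAct ρ' σ (X (e i)) = rename e (polyAct ρ σ (X i))

variable {ρ : G →* (Matrix ι ι F)ˣ} {ρ' : G →* (Matrix η η F)ˣ} {e : ι → η}

theorem IsEquivariantRename.polyAct_rename (he : IsEquivariantRename ρ ρ' e) (σ : G)
    (f : MvPolynomial ι F) : polyAct ρ' σ (rename e f) = rename e (polyAct ρ σ f) := by
  suffices (polyActAlgHom ρ' σ).comp (rename e) = (rename e).comp (polyActAlgHom ρ σ) from
    DFunLike.congr_fun this f
  exact algHom_ext fun i => by simpa using he σ i

theorem IsEquivariantRename.map_hilbertIdeal_le (he : IsEquivariantRename ρ ρ' e) :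
    (hilbertIdeal ρ).map (rename e) ≤ hilbertIdeal ρ' := by
  rw [hilbertIdeal, Ideal.map_span, Ideal.span_le]
  rintro _ ⟨f, ⟨⟨d, hd, hf⟩, hinv⟩, rfl⟩
  exact Ideal.subset_span
    ⟨⟨d, hd, hf.rename_isHomogeneous⟩, fun σ => by rw [he.polyAct_rename, hinv]⟩

theorem IsEquivariantRename.monomial_mem_hilbertIdeal [Fintype G]
    (he : IsEquivariantRename ρ ρ' e) (he_inj : e.Injective) {s : η →₀ ℕ}
    (hs : topDeg ρ < ∑ i, s (e i)) (c : F) : monomial s c ∈ hilbertIdeal ρ' := by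
  set t := s.comapDomain e he_inj.injOn
  have ht : monomial t 1 ∈ hilbertIdeal ρ :=
    monomial_mem_hilbertIdeal_of_topDeg_lt ρ (by rwa [Finsupp.degree_eq_sum]) 1
  have hle : t.mapDomain e ≤ s := fun x => by
    by_cases hx : x ∈ Set.range e
    · obtain ⟨i, rfl⟩ := hx
      rw [Finsupp.mapDomain_apply he_inj]
      rfl
    · rw [Finsupp.mapDomain_of_notMem_range _ _ hx]
      exact Nat.zero_le _
  have hmap := he.map_hilbertIdeal_le (Ideal.mem_map_of_mem (rename e) ht)
  rw [rename_monomial] at hmap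
  exact monomial_mem_of_le hmap hle c

end Rename

section DirectSum

variable {κ : Type*} [Fintype κ] [DecidableEq κ]
  (ρV : G →* (Matrix ι ι F)ˣ) (ρW : G →* (Matrix κ κ F)ˣ)

theorem isEquivariantRename_inl : IsEquivariantRename ρV (glSum ρV ρW) Sum.inl := by
  intro σ i
  simp [polyAct_X, glSum, Fintype.sum_sum_type]

theorem isEquivariantRename_inr : IsEquivariantRename ρW (glSum ρV ρW) Sum.inr := by
  intro σ i
  simp [polyAct_X, glSum, Fintype.sum_sum_type]

theorem topDeg_glSum_le [Fintype G] : topDeg (glSum ρV ρW) ≤ topDeg ρV + topDeg ρW := by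
  refine topDeg_le_of_monomial_mem _ fun s hs => ?_
  rw [Finsupp.degree_eq_sum, Fintype.sum_sum_type] at hs
  by_cases hV : topDeg ρV < ∑ i, s (Sum.inl i)
  · exact (isEquivariantRename_inl ρV ρW).monomial_mem_hilbertIdeal Sum.inl_injective hV 1
  · exact (isEquivariantRename_inr ρV ρW).monomial_mem_hilbertIdeal Sum.inr_injective
      (by omega) 1

end DirectSum

section DirectPower

variable (ρ : G →* (Matrix ι ι F)ˣ) (m : ℕ)

theorem isEquivariantRename_glPow (a : Fin m) :
    IsEquivariantRename ρ (glPow ρ m) (fun i => (i, a)) := by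
  intro σ i
  simp [polyAct_X, glPow, Fintype.sum_prod_type, Matrix.blockDiagonal_apply, ite_smul]

theorem topDeg_glPow_le [Fintype G] : topDeg (glPow ρ m) ≤ m * topDeg ρ := by
  refine topDeg_le_of_monomial_mem _ fun s hs => ?_
  rw [Finsupp.degree_eq_sum, Fintype.sum_prod_type_right] at hs
  obtain ⟨a, -, ha⟩ := Finset.exists_lt_of_sum_lt (s := Finset.univ)
    (f := fun _ : Fin m => topDeg ρ) (g := fun a => ∑ i, s (i, a)) (by simpa using hs)
  exact (isEquivariantRename_glPow ρ m a).monomial_mem_hilbertIdeal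
    (fun i j h => congrArg Prod.fst h) ha 1

end DirectPower

/-- `topdeg F[V ⊕ W]_G ≤ topdeg F[V]_G + topdeg F[W]_G`; in
particular `topdeg F[V^m]_G ≤ m · topdeg F[V]_G` for all `m`. -/
theorem topDeg_sum_le [Fintype G] {κ : Type*} [Fintype κ] [DecidableEq κ]
    (ρV : G →* (Matrix ι ι F)ˣ) (ρW : G →* (Matrix κ κ F)ˣ) :
    topDeg (glSum ρV ρW) ≤ topDeg ρV + topDeg ρW ∧
      ∀ m : ℕ, topDeg (glPow ρV m) ≤ m * topDeg ρV :=
  ⟨topDeg_glSum_le ρV ρW, fun m => topDeg_glPow_le ρV m⟩
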